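/- arXiv:2601.03970 — 2 statements merged into one kernel-verified Lean document; each statement's English description precedes it below -/
import Mathlib

section
/- If two words w and w' over the positive integers are related by the Knuth relation (K), i.e., w = u·bca·v and w' = u·bac·v with a < b ≤ c, then their labeled versions φ_w(w) and φ_w(w') (where each occurrence of an integer k is subscripted 1, 2, ... from left to right) are related by the Knuth relation (K) over the labeled alphabet. -/
open scoped BigOperators

/-! ## Words and Knuth relations -/

/-- Knuth relation (K): `u·bca·v ~ u·bac·v` with `a < b ≤ c`. -/
def KnuthK {α : Type*} [LinearOrder α] (w w' : List α) : Prop :=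
  ∃ (u v : List α) (a b c : α), a < b ∧ b ≤ c ∧
    w = u ++ [b, c, a] ++ v ∧ w' = u ++ [b, a, c] ++ v

/-- Knuth relation (K'): `u·acb·v ~ u·cab·v` with `a ≤ b < c`. -/
def KnuthK' {α : Type*} [LinearOrder α] (w w' : List α) : Prop :=
  ∃ (u v : List α) (a b c : α), a ≤ b ∧ b < c ∧
    w = u ++ [a, c, b] ++ v ∧ w' = u ++ [c, a, b] ++ v

/-- One step of a Knuth relation, in either direction. -/
def KnuthRel {α : Type*} [LinearOrder α] (w w' : List α) : Prop :=
  KnuthK w w' ∨ KnuthK w' w ∨ KnuthK' w w' ∨ KnuthK' w' w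

/-- Knuth equivalence: the reflexive-transitive closure of the Knuth relations. -/
def KnuthEquiv {α : Type*} [LinearOrder α] : List α → List α → Prop :=
  Relation.ReflTransGen KnuthRel

/-- The labeled alphabet Ñ = ℕ ×ₗ ℕ, ordered first by the letter, then by the label. -/
abbrev LblN := Lex (ℕ × ℕ)

instance : Inhabited LblN := ⟨toLex default⟩

/-- The labeling map φ_w : each occurrence of the integer `k` gets subscripts 1, 2, ...
from left to right. -/
def phiW (w : List ℕ) : List LblN :=
  (w.zipIdx.map Prod.swap).map fun p => toLex (p.2, (w.take p.1).count p.2 + 1)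

/-- The label-forgetting map, sending `k_l` to `k`. -/
def forgetW (w : List LblN) : List ℕ := w.map fun x => (ofLex x).1

/-! ## Partitions, skew shapes, tableaux -/

/-- A partition, recorded as its sequence of (1-indexed) row lengths, with `p 0 = 0`. -/
def IsPartition (p : ℕ → ℕ) : Prop :=
  p 0 = 0 ∧ (∀ i, 1 ≤ i → p (i + 1) ≤ p i) ∧ ∃ N, ∀ i, N ≤ i → p i = 0

/-- The empty partition. -/
def zeroPart : ℕ → ℕ := fun _ => 0

/-- The boxes of the skew diagram λ/μ (rows and columns indexed from 1). -/
def cells (lam mu : ℕ → ℕ) : Set (ℕ × ℕ) :=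
  {c | 1 ≤ c.1 ∧ mu c.1 < c.2 ∧ c.2 ≤ lam c.1}

/-- The semistandardness condition for a filling of λ/μ: rows weakly increase and
columns strictly increase. -/
def IsSSYT {α : Type*} [Preorder α] (lam mu : ℕ → ℕ) (T : ℕ × ℕ → α) : Prop :=
  (∀ i j, (i, j) ∈ cells lam mu → (i, j + 1) ∈ cells lam mu → T (i, j) ≤ T (i, j + 1)) ∧
  (∀ i j, (i, j) ∈ cells lam mu → (i + 1, j) ∈ cells lam mu → T (i, j) < T (i + 1, j))

/-- The conjugate partition: `conj p j = #{i ≥ 1 | p i ≥ j}`. -/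
noncomputable def conj (p : ℕ → ℕ) (j : ℕ) : ℕ :=
  Set.ncard {i : ℕ | 1 ≤ i ∧ j ≤ p i}

/-- The number of (nonempty) rows of a shape. -/
noncomputable def numRows (lam : ℕ → ℕ) : ℕ :=
  sInf {N | ∀ i, N < i → lam i = 0}

/-- The i-th row of a tableau, read left to right. -/
def rowOf {α : Type*} (lam mu : ℕ → ℕ) (T : ℕ × ℕ → α) (i : ℕ) : List α :=
  (List.range (lam i - mu i)).map fun k => T (i, mu i + k + 1)

/-- Rows `n, n-1, ..., 1` of a tableau, concatenated. -/
def rowWordUpTo {α : Type*} (lam mu : ℕ → ℕ) (T : ℕ × ℕ → α) : ℕ → List α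
  | 0 => []
  | n + 1 => rowOf lam mu T (n + 1) ++ rowWordUpTo lam mu T n

/-- The row word of a tableau: rows read left to right, from the bottom row up. -/
noncomputable def rowWord {α : Type*} (lam mu : ℕ → ℕ) (T : ℕ × ℕ → α) : List α :=
  rowWordUpTo lam mu T (numRows lam)

/-- The rectification of a word: the (shape, tableau) pair of a normal-shape
semistandard tableau whose row word is Knuth equivalent to the given word. -/
noncomputable def rectPair {α : Type*} [LinearOrder α] [Inhabited α] (w : List α) :
    (ℕ → ℕ) × (ℕ × ℕ → α) := by
  classical
  exact if h : ∃ p : (ℕ → ℕ) × (ℕ × ℕ → α),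
      IsPartition p.1 ∧ IsSSYT p.1 zeroPart p.2 ∧ KnuthEquiv (rowWord p.1 zeroPart p.2) w
    then h.choose else (zeroPart, fun _ => default)

/-- The shape of the rectification of a word. -/
noncomputable def rectShape {α : Type*} [LinearOrder α] [Inhabited α] (w : List α) : ℕ → ℕ :=
  (rectPair w).1

/-- The tableau of the rectification of a word. -/
noncomputable def rectTab {α : Type*} [LinearOrder α] [Inhabited α] (w : List α) :
    ℕ × ℕ → α :=
  (rectPair w).2

/-- The labeling map φ_T on tableaux: each occurrence of the integer `k` gets subscripts
1, 2, ... from the bottom row up, left to right within each row. -/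
noncomputable def phiT (lam mu : ℕ → ℕ) (T : ℕ × ℕ → ℕ) : ℕ × ℕ → LblN :=
  fun c => toLex (T c,
    Set.ncard {d ∈ cells lam mu | T d = T c ∧ (c.1 < d.1 ∨ (d.1 = c.1 ∧ d.2 < c.2))} + 1)

/-! ## Arms and body -/

/-- `∑_{i ≥ 2} (λ_i − μ_i)`. -/
noncomputable def tailSum (lam mu : ℕ → ℕ) : ℕ :=
  ∑ᶠ i : ℕ, if 2 ≤ i then lam i - mu i else 0

/-- `m = min{λ₂, Σ_{i≥2}(λᵢ − μᵢ)}`. -/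
noncomputable def armM (lam mu : ℕ → ℕ) : ℕ := min (lam 2) (tailSum lam mu)

/-- `n = min{λ'₂, Σ_{j≥2}(λ'ⱼ − μ'ⱼ)}`. -/
noncomputable def armN (lam mu : ℕ → ℕ) : ℕ := min (conj lam 2) (tailSum (conj lam) (conj mu))

/-- The right-arm of λ/μ: boxes `(1, m+μ₁), ..., (1, λ₁)`. -/
noncomputable def rightArm (lam mu : ℕ → ℕ) : Set (ℕ × ℕ) :=
  {c | c.1 = 1 ∧ armM lam mu + mu 1 ≤ c.2 ∧ c.2 ≤ lam 1}

/-- The left-arm of λ/μ: boxes `(n+μ'₁, 1), ..., (λ'₁, 1)`. -/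
noncomputable def leftArm (lam mu : ℕ → ℕ) : Set (ℕ × ℕ) :=
  {c | c.2 = 1 ∧ armN lam mu + conj mu 1 ≤ c.1 ∧ c.1 ≤ conj lam 1}

/-- The body of λ/μ: the boxes that are in neither arm. -/
noncomputable def body (lam mu : ℕ → ℕ) : Set (ℕ × ℕ) :=
  cells lam mu \ (rightArm lam mu ∪ leftArm lam mu)

/-! ## Semistandard tableaux over positive integers, Schur multiple zeta functions -/

/-- Semistandard Young tableaux of shape λ/μ with positive integer entries,
normalized to be `0` outside the diagram. -/
def SSYTset (lam mu : ℕ → ℕ) : Set (ℕ × ℕ → ℕ) :=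
  {T | IsSSYT lam mu T ∧ (∀ c ∈ cells lam mu, 1 ≤ T c) ∧ ∀ c, c ∉ cells lam mu → T c = 0}

/-- The Schur multiple zeta function of shape λ/μ. -/
noncomputable def schurZeta (lam mu : ℕ → ℕ) (s : ℕ × ℕ → ℂ) : ℂ :=
  ∑' M : SSYTset lam mu, ∏ᶠ c ∈ cells lam mu, ((M : ℕ × ℕ → ℕ) c : ℂ) ^ (-(s c))

/-- A corner of λ/μ. -/
def ShapeCorner (lam mu : ℕ → ℕ) (c : ℕ × ℕ) : Prop :=
  c ∈ cells lam mu ∧ (c.1 + 1, c.2) ∉ cells lam mu ∧ (c.1, c.2 + 1) ∉ cells lam mu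

/-- The domain of absolute convergence `W_{λ/μ}`. -/
def InDomain (lam mu : ℕ → ℕ) (s : ℕ × ℕ → ℂ) : Prop :=
  ∀ c ∈ cells lam mu, 1 ≤ (s c).re ∧ (ShapeCorner lam mu c → 1 < (s c).re)

/-! ## The shape μ * ν -/

/-- The outer shape ψ of μ * ν: `ψᵢ = μ₁ + νᵢ` for `i ≤ ℓ(ν)`, `ψᵢ = μ_{i−ℓ(ν)}` else. -/
noncomputable def starOuter (mu nu : ℕ → ℕ) : ℕ → ℕ := fun i =>
  if i = 0 then 0 else if i ≤ conj nu 1 then mu 1 + nu i else mu (i - conj nu 1)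

/-- The inner (rectangle) shape of μ * ν : μ₁ columns and ν'₁ rows. -/
noncomputable def starInner (mu nu : ℕ → ℕ) : ℕ → ℕ := fun i =>
  if 1 ≤ i ∧ i ≤ conj nu 1 then mu 1 else 0

/-- The filling `S * T` of μ * ν : `S` (shape μ) below, `T` (shape ν) to the right. -/
noncomputable def starTab {γ : Type*} (mu nu : ℕ → ℕ) (s t : ℕ × ℕ → γ) : ℕ × ℕ → γ :=
  fun c => if c.1 ≤ conj nu 1 then t (c.1, c.2 - mu 1) else s (c.1 - conj nu 1, c.2)

/-! ## Schur functions as formal power series, Littlewood–Richardson coefficients -/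

/-- The (skew) Schur function `s_{λ/μ}` as a formal power series in variables
`x₀, x₁, x₂, ...` : the coefficient of a monomial `d` is the number of semistandard
tableaux of shape λ/μ and content `d`. -/
noncomputable def schurSeries (lam mu : ℕ → ℕ) : MvPowerSeries ℕ ℤ :=
  fun d => (Set.ncard {T ∈ SSYTset lam mu |
    ∀ k : ℕ, d k = Set.ncard {c ∈ cells lam mu | T c = k}} : ℤ)

/-- The power series `Σ_λ c_λ · s_λ`, the sum ranging over all partitions λ. -/
noncomputable def seriesSum (cc : (ℕ → ℕ) → ℕ) : MvPowerSeries ℕ ℤ :=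
  fun d => ∑ᶠ lam ∈ {p : ℕ → ℕ | IsPartition p}, (cc lam : ℤ) * schurSeries lam zeroPart d

/-! ## Jeu de taquin slides -/

/-- One elementary jeu de taquin slide on a configuration (hole, filled region, filling):
the smaller of the entries to the right of and below the hole moves into the hole
(the one below moving in case of a tie), and the hole moves to the vacated box. -/
inductive JdtStep {α : Type*} [LinearOrder α] :
    ((ℕ × ℕ) × Set (ℕ × ℕ) × (ℕ × ℕ → α)) → ((ℕ × ℕ) × Set (ℕ × ℕ) × (ℕ × ℕ → α)) → Prop
  | right (h : ℕ × ℕ) (S : Set (ℕ × ℕ)) (T : ℕ × ℕ → α)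
      (hr : (h.1, h.2 + 1) ∈ S)
      (hcmp : (h.1 + 1, h.2) ∈ S → T (h.1, h.2 + 1) < T (h.1 + 1, h.2)) :
      JdtStep (h, S, T)
        ((h.1, h.2 + 1), insert h (S \ {(h.1, h.2 + 1)}),
          Function.update T h (T (h.1, h.2 + 1)))
  | down (h : ℕ × ℕ) (S : Set (ℕ × ℕ)) (T : ℕ × ℕ → α)
      (hd : (h.1 + 1, h.2) ∈ S)
      (hcmp : (h.1, h.2 + 1) ∈ S → T (h.1 + 1, h.2) ≤ T (h.1, h.2 + 1)) :
      JdtStep (h, S, T)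
        ((h.1 + 1, h.2), insert h (S \ {(h.1 + 1, h.2)}),
          Function.update T h (T (h.1 + 1, h.2)))

/-- An inside corner of λ/μ: a corner `c` of the deleted diagram μ. -/
def InsideCorner (lam mu : ℕ → ℕ) (c : ℕ × ℕ) : Prop :=
  1 ≤ c.1 ∧ 1 ≤ c.2 ∧ c.2 = mu c.1 ∧ mu (c.1 + 1) < c.2

/-- A full jeu de taquin slide from an inside corner, acting on (outer shape, inner
shape, filling) triples: the hole starts at an inside corner `c`, elementary slides are
repeated until the hole has no neighbor to its right or below, and then the hole
(at an outside corner `h`) is removed. -/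
def SlideRel {α : Type*} [LinearOrder α] :
    ((ℕ → ℕ) × (ℕ → ℕ) × (ℕ × ℕ → α)) → ((ℕ → ℕ) × (ℕ → ℕ) × (ℕ × ℕ → α)) → Prop :=
  fun p q =>
    ∃ c h : ℕ × ℕ, InsideCorner p.1 p.2.1 c ∧
      Relation.ReflTransGen JdtStep (c, cells p.1 p.2.1, p.2.2)
        (h, insert c (cells p.1 p.2.1) \ {h}, q.2.2) ∧
      (h.1, h.2 + 1) ∉ insert c (cells p.1 p.2.1) ∧
      (h.1 + 1, h.2) ∉ insert c (cells p.1 p.2.1) ∧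
      h.2 = p.1 h.1 ∧
      q.1 = Function.update p.1 h.1 (h.2 - 1) ∧
      q.2.1 = Function.update p.2.1 c.1 (c.2 - 1)

/-! The label of a letter only depends on the multiset of letters to its left. The
move `bca ↦ bac` therefore relabels nothing: it only exchanges the adjacent letters `c` and
`a`, which are distinct, and the letters after the block see the same multiset before them.
The order conditions transfer, the one case needing care being `b = c`, where `c` carries
the next label after that of `b`. -/

section LabelFrom

variable {α : Type*} [DecidableEq α]

/-- The labeling of `t` when the letters of `pre` have already been read. -/
def labelFrom : List α → List α → List (Lex (α × ℕ))
  | _, [] => []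
  | pre, x :: t => toLex (x, pre.count x + 1) :: labelFrom (pre ++ [x]) t

theorem map_zipIdx_eq_labelFrom (t : List α) (pre : List α) (n : ℕ) :
    (t.zipIdx n).map (fun p => toLex (p.1, (pre ++ t.take (p.2 - n)).count p.1 + 1)) =
      labelFrom pre t := by
  induction t generalizing pre n with
  | nil => rfl
  | cons x t ih =>
    rw [List.zipIdx_cons, List.map_cons, labelFrom, ← ih (pre ++ [x]) (n + 1)]
    congr 1
    · simp
    · refine List.map_congr_left fun ⟨y, i⟩ hyi => ?_
      have hni : n + 1 ≤ i := (List.mem_zipIdx hyi).1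
      obtain ⟨k, rfl⟩ := Nat.exists_eq_add_of_le hni
      simp [show n + 1 + k - n = k + 1 by omega]

theorem labelFrom_append (pre s t : List α) :
    labelFrom pre (s ++ t) = labelFrom pre s ++ labelFrom (pre ++ s) t := by
  induction s generalizing pre with
  | nil => simp [labelFrom]
  | cons x s ih => simp [labelFrom, ih]

theorem labelFrom_congr_of_perm {pre₁ pre₂ : List α} (hpre : pre₁.Perm pre₂) (t : List α) :
    labelFrom pre₁ t = labelFrom pre₂ t := by
  induction t generalizing pre₁ pre₂ with
  | nil => rfl
  | cons x t ih => simp only [labelFrom, hpre.count_eq x, ih (hpre.append_right [x])]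

theorem labelFrom_cons_cons_of_ne {x y : α} (hxy : x ≠ y) (pre t : List α) :
    labelFrom pre (x :: y :: t) =
      toLex (x, pre.count x + 1) :: toLex (y, pre.count y + 1) :: labelFrom (pre ++ [x, y]) t := by
  simp [labelFrom, List.count_append, hxy]

end LabelFrom

theorem phiW_eq_labelFrom (w : List ℕ) : phiW w = labelFrom [] w :=
  (List.map_map ..).trans (map_zipIdx_eq_labelFrom w [] 0)

theorem phiW_append (u s : List ℕ) : phiW (u ++ s) = phiW u ++ labelFrom u s := by
  rw [phiW_eq_labelFrom, phiW_eq_labelFrom, labelFrom_append, List.nil_append]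

theorem knuthK_phiW (w w' : List ℕ) (h : KnuthK w w') : KnuthK (phiW w) (phiW w') := by
  obtain ⟨u, v, a, b, c, hab, hbc, rfl, rfl⟩ := h
  have hba : b ≠ a := hab.ne'
  have hca : c ≠ a := (hab.trans_le hbc).ne'
  set lb := u.count b + 1
  set lc := (u ++ [b]).count c + 1
  set la := u.count a + 1
  have hw : phiW (u ++ [b, c, a] ++ v) =
      phiW u ++ [toLex (b, lb), toLex (c, lc), toLex (a, la)] ++
        labelFrom (u ++ [b, c, a]) v := by
    simp [phiW_append, labelFrom, List.count_append, hba, hca, lb, lc, la]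
  have hw' : phiW (u ++ [b, a, c] ++ v) =
      phiW u ++ [toLex (b, lb), toLex (a, la), toLex (c, lc)] ++
        labelFrom (u ++ [b, c, a]) v := by
    rw [List.append_assoc, phiW_append, List.cons_append, List.cons_append, List.singleton_append,
      labelFrom, labelFrom_cons_cons_of_ne hca.symm,
      labelFrom_congr_of_perm ((List.Perm.swap c a []).append_left (u ++ [b]))]
    simp [List.count_append, List.count_singleton, hba, lb, lc, la]
  refine ⟨phiW u, _, _, _, _, Prod.Lex.toLex_lt_toLex.2 (.inl hab), ?_, hw, hw'⟩
  rcases hbc.lt_or_eq with hlt | rfl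
  · exact Prod.Lex.toLex_le_toLex.2 (.inl hlt)
  · exact Prod.Lex.toLex_le_toLex.2 (.inr ⟨rfl, by simp [lb, lc]⟩)
end

section
/- For partitions μ, ν and tableaux of complex variables s ∈ T(μ, ℂ), t ∈ T(ν, ℂ) in the domain of absolute convergence, the Schur multiple zeta functions satisfy ζ_μ(s) · ζ_ν(t) = ζ_{μ*ν}(s * t). -/
open scoped BigOperators

/-!
Gluing a tableau `N` of shape `ν` to the right of the `ν'₁ × μ₁` rectangle and a tableau `M`
of shape `μ` below it gives a bijection `SSYT(μ) × SSYT(ν) ≃ SSYT(μ * ν)`, `(M, N) ↦ M * N`: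
rows never cross the two blocks, and the only column adjacency between them would put a box of
the last row of `ν` (strictly right of column `μ₁`) above a box of the first row of `μ` (weakly
left of it). Along this bijection the summand of `ζ_{μ*ν}(s * t)` is the product of the summands
of `ζ_μ(s)` and `ζ_ν(t)`, and the product of two series over `ℂ` is the series of the products:
by absolute convergence when both factors converge, and otherwise both sides are `0`, since
`f ⊗ g` is summable only if `f` and `g` are, unless one of them vanishes identically.
-/

theorem tsum_mul_tsum_eq_tsum_prod {ι ι' 𝕜 : Type*} [RCLike 𝕜] (f : ι → 𝕜) (g : ι' → 𝕜) :
    (∑' a, f a) * (∑' b, g b) = ∑' p : ι × ι', f p.1 * g p.2 := by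
  by_cases hfg : Summable f ∧ Summable g
  · exact tsum_mul_tsum_of_summable_norm (summable_norm_iff.mpr hfg.1)
      (summable_norm_iff.mpr hfg.2)
  by_cases hf₀ : f = 0
  · simp [hf₀]
  by_cases hg₀ : g = 0
  · simp [hg₀]
  obtain ⟨a₀, ha₀⟩ := Function.ne_iff.mp hf₀
  obtain ⟨b₀, hb₀⟩ := Function.ne_iff.mp hg₀
  have hprod : ¬ Summable fun p : ι × ι' => f p.1 * g p.2 := fun h =>
    hfg ⟨(summable_mul_right_iff hb₀).mp (h.prod_symm.prod_factor b₀),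
      (summable_mul_left_iff ha₀).mp (h.prod_factor a₀)⟩
  rw [tsum_eq_zero_of_not_summable hprod]
  rcases not_and_or.mp hfg with hf | hg
  · rw [tsum_eq_zero_of_not_summable hf, zero_mul]
  · rw [tsum_eq_zero_of_not_summable hg, mul_zero]

lemma mem_cells_zeroPart {p : ℕ → ℕ} {i j : ℕ} :
    (i, j) ∈ cells p zeroPart ↔ 1 ≤ i ∧ 1 ≤ j ∧ j ≤ p i := Iff.rfl

namespace IsPartition

lemma antitoneOn {p : ℕ → ℕ} (hp : IsPartition p) : AntitoneOn p (Set.Ici 1) :=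
  antitoneOn_nat_Ici_of_succ_le hp.2.1

lemma cells_finite {p : ℕ → ℕ} (hp : IsPartition p) : (cells p zeroPart).Finite := by
  obtain ⟨N, hN⟩ := hp.2.2
  refine ((Set.finite_Iio N).prod (Set.finite_Iic (p 1))).subset ?_
  rintro ⟨i, j⟩ ⟨hi, hj, hji⟩
  dsimp only [zeroPart] at hi hj hji
  refine ⟨Set.mem_Iio.mpr ?_, hji.trans (hp.antitoneOn (le_refl 1) hi hi)⟩
  by_contra! hNi
  have := hN i hNi
  omega

lemma le_conj_one_of_mem_cells {p : ℕ → ℕ} (hp : IsPartition p) {i j : ℕ}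
    (hc : (i, j) ∈ cells p zeroPart) : i ≤ conj p 1 := by
  obtain ⟨hi, hj, hji⟩ := mem_cells_zeroPart.mp hc
  have hpi : 1 ≤ p i := hj.trans hji
  obtain ⟨N, hN⟩ := hp.2.2
  have hfin : {k | 1 ≤ k ∧ 1 ≤ p k}.Finite :=
    (Set.finite_Iio N).subset fun k ⟨_, hk⟩ => Set.mem_Iio.mpr <| by
      by_contra! hNk
      have := hN k hNk
      omega
  calc i = (Set.Icc 1 i).ncard := by simp
    _ ≤ conj p 1 := Set.ncard_le_ncard
      (fun k ⟨hk, hki⟩ => ⟨hk, hpi.trans (hp.antitoneOn hk hi hki)⟩) hfin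

end IsPartition

lemma indicator_comp_add_mem_SSYTset {lam mu lam' mu' : ℕ → ℕ} {P : ℕ × ℕ → ℕ}
    (hP : P ∈ SSYTset lam' mu') (d : ℕ × ℕ)
    (hd : ∀ c ∈ cells lam mu, c + d ∈ cells lam' mu') :
    (cells lam mu).indicator (fun c => P (c + d)) ∈ SSYTset lam mu := by
  obtain ⟨⟨hProw, hPcol⟩, hPpos, -⟩ := hP
  have hadd : ∀ i j : ℕ, (i, j) + d = (i + d.1, j + d.2) := fun _ _ => rfl
  refine ⟨⟨fun i j hc hc' => ?_, fun i j hc hc' => ?_⟩, fun c hc => ?_,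
    fun c hc => Set.indicator_of_notMem hc _⟩
  · have hc'd := hd _ hc'
    rw [hadd, add_right_comm] at hc'd
    rw [Set.indicator_of_mem hc, Set.indicator_of_mem hc', hadd, hadd, add_right_comm]
    exact hProw _ _ (hd _ hc) hc'd
  · have hc'd := hd _ hc'
    rw [hadd, add_right_comm] at hc'd
    rw [Set.indicator_of_mem hc, Set.indicator_of_mem hc', hadd, hadd, add_right_comm]
    exact hPcol _ _ (hd _ hc) hc'd
  · rw [Set.indicator_of_mem hc]
    exact hPpos _ (hd c hc)

section Star

variable {mu nu : ℕ → ℕ}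

lemma mem_cells_star_of_le {i j : ℕ} (hi : i ≤ conj nu 1) :
    (i, j) ∈ cells (starOuter mu nu) (starInner mu nu) ↔
      mu 1 < j ∧ (i, j - mu 1) ∈ cells nu zeroPart := by
  simp only [cells, starOuter, starInner, zeroPart, Set.mem_ofPred_eq]
  split_ifs <;> omega

lemma mem_cells_star_of_lt {i j : ℕ} (hi : conj nu 1 < i) :
    (i, j) ∈ cells (starOuter mu nu) (starInner mu nu) ↔
      (i - conj nu 1, j) ∈ cells mu zeroPart := by
  simp only [cells, starOuter, starInner, zeroPart, Set.mem_ofPred_eq]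
  split_ifs <;> omega

lemma starTab_of_le {γ : Type*} (s t : ℕ × ℕ → γ) {i j : ℕ} (hi : i ≤ conj nu 1) :
    starTab mu nu s t (i, j) = t (i, j - mu 1) :=
  if_pos hi

lemma starTab_of_lt {γ : Type*} (s t : ℕ × ℕ → γ) {i j : ℕ} (hi : conj nu 1 < i) :
    starTab mu nu s t (i, j) = s (i - conj nu 1, j) :=
  if_neg hi.not_ge

lemma apply_starTab₂ {α β γ : Type*} (f : α → β → γ) (X Y : ℕ × ℕ → α) (X' Y' : ℕ × ℕ → β)
    (c : ℕ × ℕ) :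
    f (starTab mu nu X Y c) (starTab mu nu X' Y' c) =
      starTab mu nu (fun c => f (X c) (X' c)) (fun c => f (Y c) (Y' c)) c :=
  apply_ite₂ f _ _ _ _ _

lemma isSSYT_starTab {α : Type*} [Preorder α] {M N : ℕ × ℕ → α}
    (hM : IsSSYT mu zeroPart M) (hN : IsSSYT nu zeroPart N) :
    IsSSYT (starOuter mu nu) (starInner mu nu) (starTab mu nu M N) := by
  refine ⟨fun i j hc hc' => ?_, fun i j hc hc' => ?_⟩
  · rcases le_or_gt i (conj nu 1) with hi | hi
    · rw [mem_cells_star_of_le hi] at hc hc'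
      have hj : j + 1 - mu 1 = j - mu 1 + 1 := by omega
      rw [hj] at hc'
      rw [starTab_of_le _ _ hi, starTab_of_le _ _ hi, hj]
      exact hN.1 _ _ hc.2 hc'.2
    · rw [mem_cells_star_of_lt hi] at hc hc'
      rw [starTab_of_lt _ _ hi, starTab_of_lt _ _ hi]
      exact hM.1 _ _ hc hc'
  · rcases lt_trichotomy i (conj nu 1) with hi | rfl | hi
    · rw [mem_cells_star_of_le hi.le] at hc
      rw [mem_cells_star_of_le hi] at hc'
      rw [starTab_of_le _ _ hi.le, starTab_of_le _ _ hi]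
      exact hN.2 _ _ hc.2 hc'.2
    · rw [mem_cells_star_of_le le_rfl] at hc
      rw [mem_cells_star_of_lt (Nat.lt_add_one _), Nat.add_sub_cancel_left] at hc'
      exact absurd (mem_cells_zeroPart.mp hc').2.2 (by omega)
    · have hi' : i + 1 - conj nu 1 = i - conj nu 1 + 1 := by omega
      rw [mem_cells_star_of_lt hi] at hc
      rw [mem_cells_star_of_lt (by omega), hi'] at hc'
      rw [starTab_of_lt _ _ hi, starTab_of_lt _ _ (by omega), hi']
      exact hM.2 _ _ hc hc'

lemma starTab_mem_SSYTset {M N : ℕ × ℕ → ℕ} (hM : M ∈ SSYTset mu zeroPart)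
    (hN : N ∈ SSYTset nu zeroPart) :
    starTab mu nu M N ∈ SSYTset (starOuter mu nu) (starInner mu nu) := by
  refine ⟨isSSYT_starTab hM.1 hN.1, fun ⟨i, j⟩ hc => ?_, fun ⟨i, j⟩ hc => ?_⟩ <;>
    rcases le_or_gt i (conj nu 1) with hi | hi
  · rw [mem_cells_star_of_le hi] at hc
    rw [starTab_of_le _ _ hi]
    exact hN.2.1 _ hc.2
  · rw [mem_cells_star_of_lt hi] at hc
    rw [starTab_of_lt _ _ hi]
    exact hM.2.1 _ hc
  · rw [mem_cells_star_of_le hi] at hc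
    rw [starTab_of_le _ _ hi]
    refine hN.2.2 _ fun hc' => hc ⟨?_, hc'⟩
    have := hc'.2.1
    omega
  · rw [mem_cells_star_of_lt hi] at hc
    rw [starTab_of_lt _ _ hi]
    exact hM.2.2 _ hc

lemma starTab_add_conj {γ : Type*} (s t : ℕ × ℕ → γ) {c : ℕ × ℕ} (hc : 1 ≤ c.1) :
    starTab mu nu s t (c + (conj nu 1, 0)) = s c := by
  obtain ⟨i, j⟩ := c
  rw [Prod.mk_add_mk, add_zero, starTab_of_lt _ _ (by omega), Nat.add_sub_cancel]

lemma starTab_add_mu {γ : Type*} (hnu : IsPartition nu) (s t : ℕ × ℕ → γ) {c : ℕ × ℕ}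
    (hc : c ∈ cells nu zeroPart) :
    starTab mu nu s t (c + (0, mu 1)) = t c := by
  obtain ⟨i, j⟩ := c
  rw [Prod.mk_add_mk, add_zero, starTab_of_le _ _ (hnu.le_conj_one_of_mem_cells hc),
    Nat.add_sub_cancel]

lemma cells_star (hnu : IsPartition nu) :
    cells (starOuter mu nu) (starInner mu nu) =
      (· + (conj nu 1, 0)) '' cells mu zeroPart ∪ (· + (0, mu 1)) '' cells nu zeroPart := by
  ext ⟨i, j⟩
  constructor
  · intro hc
    rcases lt_or_ge (conj nu 1) i with hi | hi
    · rw [mem_cells_star_of_lt hi] at hc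
      refine Or.inl ⟨_, hc, ?_⟩
      simp only [Prod.mk_add_mk, add_zero, Prod.mk.injEq, and_true]
      omega
    · rw [mem_cells_star_of_le hi] at hc
      refine Or.inr ⟨_, hc.2, ?_⟩
      simp only [Prod.mk_add_mk, add_zero, Prod.mk.injEq, true_and]
      omega
  · rintro (⟨⟨a, b⟩, hab, he⟩ | ⟨⟨a, b⟩, hab, he⟩) <;>
      simp only [Prod.mk_add_mk, add_zero, Prod.mk.injEq] at he <;> obtain ⟨rfl, rfl⟩ := he
    · rw [mem_cells_star_of_lt (by have := hab.1; omega), Nat.add_sub_cancel]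
      exact hab
    · rw [mem_cells_star_of_le (hnu.le_conj_one_of_mem_cells hab),
        Nat.add_sub_cancel]
      exact ⟨by have := hab.2.1; omega, hab⟩

lemma finprod_mem_cells_star {M : Type*} [CommMonoid M] (hmu : IsPartition mu)
    (hnu : IsPartition nu) (X Y : ℕ × ℕ → M) :
    ∏ᶠ c ∈ cells (starOuter mu nu) (starInner mu nu), starTab mu nu X Y c =
      (∏ᶠ c ∈ cells mu zeroPart, X c) * ∏ᶠ c ∈ cells nu zeroPart, Y c := by
  have hdisj : Disjoint ((· + (conj nu 1, 0)) '' cells mu zeroPart)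
      ((· + (0, mu 1)) '' cells nu zeroPart) := by
    rw [Set.disjoint_left]
    rintro _ ⟨⟨i, j⟩, hij, rfl⟩ ⟨⟨k, l⟩, hkl, he⟩
    simp only [Prod.mk_add_mk, add_zero, Prod.mk.injEq] at he
    have := hnu.le_conj_one_of_mem_cells hkl
    have := hij.1
    omega
  rw [cells_star hnu, finprod_mem_union hdisj (hmu.cells_finite.image _)
    (hnu.cells_finite.image _), finprod_mem_image (add_left_injective _).injOn,
    finprod_mem_image (add_left_injective _).injOn]
  congr 1 <;> refine finprod_mem_congr rfl fun c hc => ?_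
  · exact starTab_add_conj X Y hc.1
  · exact starTab_add_mu hnu X Y hc

noncomputable def starEquiv (hnu : IsPartition nu) :
    SSYTset mu zeroPart × SSYTset nu zeroPart ≃ SSYTset (starOuter mu nu) (starInner mu nu) where
  toFun p := ⟨starTab mu nu p.1 p.2, starTab_mem_SSYTset p.1.2 p.2.2⟩
  invFun P :=
    (⟨(cells mu zeroPart).indicator fun c => P.1 (c + (conj nu 1, 0)),
      indicator_comp_add_mem_SSYTset P.2 _ fun c hc => cells_star hnu ▸ Or.inl ⟨c, hc, rfl⟩⟩,
     ⟨(cells nu zeroPart).indicator fun c => P.1 (c + (0, mu 1)),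
      indicator_comp_add_mem_SSYTset P.2 _ fun c hc => cells_star hnu ▸ Or.inr ⟨c, hc, rfl⟩⟩)
  left_inv := by
    rintro ⟨⟨M, hM⟩, ⟨N, hN⟩⟩
    ext c : 3 <;> dsimp only
    · by_cases hc : c ∈ cells mu zeroPart
      · exact (Set.indicator_of_mem hc _).trans (starTab_add_conj M N hc.1)
      · exact (Set.indicator_of_notMem hc _).trans (hM.2.2 c hc).symm
    · by_cases hc : c ∈ cells nu zeroPart
      · exact (Set.indicator_of_mem hc _).trans (starTab_add_mu hnu M N hc)
      · exact (Set.indicator_of_notMem hc _).trans (hN.2.2 c hc).symm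
  right_inv := by
    rintro ⟨P, hP⟩
    ext ⟨i, j⟩ : 2
    dsimp only
    rcases lt_or_ge (conj nu 1) i with hi | hi
    · rw [starTab_of_lt _ _ hi]
      by_cases hc : (i - conj nu 1, j) ∈ cells mu zeroPart
      · rw [Set.indicator_of_mem hc, Prod.mk_add_mk, add_zero, Nat.sub_add_cancel hi.le]
      · rw [Set.indicator_of_notMem hc, hP.2.2 _ (by rwa [mem_cells_star_of_lt hi])]
    · rw [starTab_of_le _ _ hi]
      by_cases hc : (i, j - mu 1) ∈ cells nu zeroPart
      · have := hc.2.1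
        rw [Set.indicator_of_mem hc, Prod.mk_add_mk, add_zero, Nat.sub_add_cancel (by omega)]
      · refine (Set.indicator_of_notMem hc _).trans (hP.2.2 _ ?_).symm
        rw [mem_cells_star_of_le hi]
        exact fun h => hc h.2

end Star

theorem schurZeta_mul_general (mu nu : ℕ → ℕ) (hmu : IsPartition mu) (hnu : IsPartition nu)
    (s t : ℕ × ℕ → ℂ) :
    schurZeta mu zeroPart s * schurZeta nu zeroPart t
      = schurZeta (starOuter mu nu) (starInner mu nu) (starTab mu nu s t) := by
  rw [schurZeta, schurZeta, schurZeta, tsum_mul_tsum_eq_tsum_prod, ← (starEquiv hnu).tsum_eq]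
  refine tsum_congr fun p => ?_
  rw [← finprod_mem_cells_star hmu hnu]
  refine finprod_mem_congr rfl fun c _ => ?_
  exact (apply_starTab₂ (fun (m : ℕ) (z : ℂ) => (m : ℂ) ^ (-z)) _ _ _ _ c).symm

theorem schurZeta_mul (mu nu : ℕ → ℕ) (hmu : IsPartition mu) (hnu : IsPartition nu)
    (s t : ℕ × ℕ → ℂ) (hs : InDomain mu zeroPart s) (ht : InDomain nu zeroPart t) :
    schurZeta mu zeroPart s * schurZeta nu zeroPart t
      = schurZeta (starOuter mu nu) (starInner mu nu) (starTab mu nu s t) :=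
  schurZeta_mul_general mu nu hmu hnu s t
end
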